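/- Let S be a finite connected subgraph of the toroidal lattice (Z/L)², and let S̃ ⊆ Z² be its preimage under the quotient map Z² → (Z/L)². Then S contains a closed walk with nonzero net winding vector in Z² if and only if some connected component of S̃ (under nearest-neighbor adjacency in Z²) is invariant under translation by some nonzero vector in L·Z², equivalently is infinite. -/

import Mathlib

/-- A horizontal k-mer on the `L × L` torus with parent site `(x, y)`. -/
def hKmer (L k : ℕ) (x y : ZMod L) : Set (ZMod L × ZMod L) :=
  {s | ∃ j : ℕ, j < k ∧ s = (x + (j : ZMod L), y)}

/-- A vertical k-mer on the `L × L` torus with parent site `(x, y)`. -/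
def vKmer (L k : ℕ) (x y : ZMod L) : Set (ZMod L × ZMod L) :=
  {s | ∃ j : ℕ, j < k ∧ s = (x, y + (j : ZMod L))}

/-- A set of sites is a (horizontal or vertical) k-mer. -/
def IsKmer (L k : ℕ) (m : Set (ZMod L × ZMod L)) : Prop :=
  ∃ x y : ZMod L, m = hKmer L k x y ∨ m = vKmer L k x y

/-- A configuration: a family of pairwise disjoint k-mers. -/
def IsConfig (L k : ℕ) (C : Set (Set (ZMod L × ZMod L))) : Prop :=
  (∀ m ∈ C, IsKmer L k m) ∧ C.Pairwise Disjoint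

/-- A jammed configuration: no further k-mer fits entirely on empty sites. -/
def IsJammed (L k : ℕ) (C : Set (Set (ZMod L × ZMod L))) : Prop :=
  IsConfig L k C ∧ ∀ m, IsKmer L k m → ¬ Disjoint m (⋃₀ C)

/-- Toroidal nearest-neighbor adjacency. -/
def Adj (L : ℕ) (a b : ZMod L × ZMod L) : Prop :=
  b - a ∈ ({((1 : ZMod L), (0 : ZMod L)), (-1, 0), (0, 1), (0, -1)} :
    Set (ZMod L × ZMod L))

/-- `Cl` is a cluster (connected component) of the set `occ` of occupied sites. -/
def IsCluster (L : ℕ) (occ Cl : Set (ZMod L × ZMod L)) : Prop :=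
  ∃ a ∈ occ, Cl =
    {b | b ∈ occ ∧ Relation.ReflTransGen (fun p q => p ∈ occ ∧ q ∈ occ ∧ Adj L p q) a b}

/-- Reduction of an integer vector modulo `L` in both coordinates. -/
def castPair (L : ℕ) (v : ℤ × ℤ) : ZMod L × ZMod L := ((v.1 : ZMod L), (v.2 : ZMod L))

/-- Unit steps in `ℤ²`. -/
def IsUnitStep (v : ℤ × ℤ) : Prop := v = (1, 0) ∨ v = (-1, 0) ∨ v = (0, 1) ∨ v = (0, -1)

/-- `S` wraps around the torus: it contains a closed nearest-neighbor walk whose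
net winding vector (sum of the `ℤ²` lifts of its steps) is nonzero. -/
def Wraps (L : ℕ) (S : Set (ZMod L × ZMod L)) : Prop :=
  ∃ (x : ZMod L × ZMod L) (n : ℕ) (d : Fin n → ℤ × ℤ),
    (∀ i, IsUnitStep (d i)) ∧
    (∀ m : ℕ, m ≤ n → x + castPair L (∑ i : Fin n, if (i : ℕ) < m then d i else 0) ∈ S) ∧
    castPair L (∑ i, d i) = 0 ∧ (∑ i, d i) ≠ 0

/-- Nearest-neighbor adjacency on `ℤ²`. -/
def AdjZ (a b : ℤ × ℤ) : Prop := IsUnitStep (b - a)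

/-- The lift of `S ⊆ (ZMod L)²` under the quotient map `ℤ² → (ZMod L)²`. -/
def lift (L : ℕ) (S : Set (ZMod L × ZMod L)) : Set (ℤ × ℤ) :=
  {p | castPair L p ∈ S}

/-- The connected component of `p` in the lift of `S`, under nearest-neighbor
adjacency in `ℤ²`. -/
def liftComp (L : ℕ) (S : Set (ZMod L × ZMod L)) (p : ℤ × ℤ) : Set (ℤ × ℤ) :=
  {q | Relation.ReflTransGen
    (fun u v => u ∈ lift L S ∧ v ∈ lift L S ∧ AdjZ u v) p q}

/-!
A closed walk in `S` starting at `x` lifts, from any preimage `p` of `x`, to a walk in the lift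
`S̃` from `p` to `p + v`, where `v ∈ L·ℤ²` is its winding vector; conversely a path in `S̃`
between two preimages of the same site projects to a closed walk in `S`. So `S` wraps iff some
component of `S̃` contains two points `p ≠ p + v` with `v ∈ L·ℤ²`. Translation by such `v`
permutes the components of `S̃`, so this happens iff a component is invariant under `· + v`,
and then it contains the whole orbit `p + ℕv`. Conversely, an infinite component maps into the
finite set `S`, so by pigeonhole it contains two distinct preimages of one site.
-/

section PrefixSum

variable {M : Type*} [AddCommMonoid M]

def prefixSum {n : ℕ} (d : Fin n → M) (m : ℕ) : M :=
  ∑ i : Fin n, if (i : ℕ) < m then d i else 0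

@[simp]
lemma prefixSum_zero {n : ℕ} (d : Fin n → M) : prefixSum d 0 = 0 := by
  simp [prefixSum]

lemma prefixSum_of_le {n m : ℕ} (d : Fin n → M) (h : n ≤ m) : prefixSum d m = ∑ i, d i :=
  Finset.sum_congr rfl fun i _ => if_pos (i.isLt.trans_le h)

lemma prefixSum_succ {n m : ℕ} (d : Fin n → M) (hm : m < n) :
    prefixSum d (m + 1) = prefixSum d m + d ⟨m, hm⟩ := by
  have hd : d ⟨m, hm⟩ = ∑ i, if i = ⟨m, hm⟩ then d i else 0 := by simp
  rw [prefixSum, prefixSum, hd, ← Finset.sum_add_distrib]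
  refine Finset.sum_congr rfl fun i _ => ?_
  rcases lt_trichotomy (i : ℕ) m with h | h | h
  · simp [h, Nat.lt_succ_of_lt h, Fin.ext_iff, h.ne]
  · simp [h, Fin.ext_iff]
  · simp [Fin.ext_iff, h.ne', h.not_gt, (Nat.succ_le_of_lt h).not_gt]

lemma prefixSum_snoc {n : ℕ} (d : Fin n → M) (e : M) (m : ℕ) :
    prefixSum (Fin.snoc d e : Fin (n + 1) → M) m = prefixSum d m + if n < m then e else 0 := by
  simp [prefixSum, Fin.sum_univ_castSucc]

end PrefixSum

section Walks

variable {T : Set (ℤ × ℤ)} {p q : ℤ × ℤ}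

lemma reflTransGen_iff_exists_steps (hp : p ∈ T) :
    Relation.ReflTransGen (fun u v => u ∈ T ∧ v ∈ T ∧ AdjZ u v) p q ↔
      ∃ (n : ℕ) (d : Fin n → ℤ × ℤ), (∀ i, IsUnitStep (d i)) ∧
        (∀ m ≤ n, p + prefixSum d m ∈ T) ∧ p + ∑ i, d i = q := by
  constructor
  · intro h
    induction h with
    | refl =>
      exact ⟨0, Fin.elim0, fun i => i.elim0, fun m _ => by simpa [prefixSum] using hp, by simp⟩
    | @tail b c _ hbc ih =>
      obtain ⟨n, d, hstep, hmem, rfl⟩ := ih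
      refine ⟨n + 1, Fin.snoc d (c - p - ∑ i, d i), fun i => ?_, fun m hm => ?_, ?_⟩
      · refine Fin.lastCases ?_ (fun j => ?_) i
        · simpa [AdjZ, sub_sub] using hbc.2.2
        · simpa using hstep j
      · rw [prefixSum_snoc]
        rcases hm.lt_or_eq with hm | rfl
        · simpa [show ¬ n < m by omega] using hmem m (by omega)
        · simpa [prefixSum_of_le d n.le_succ] using hbc.2.1
      · simp [Fin.sum_univ_castSucc]
  · rintro ⟨n, d, hstep, hmem, rfl⟩
    have reach : ∀ m ≤ n, Relation.ReflTransGen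
        (fun u v => u ∈ T ∧ v ∈ T ∧ AdjZ u v) p (p + prefixSum d m) := by
      intro m hm
      induction m with
      | zero => simpa using Relation.ReflTransGen.refl
      | succ m ih =>
        refine (ih (by omega)).tail ⟨hmem m (by omega), hmem (m + 1) hm, ?_⟩
        simpa [AdjZ, prefixSum_succ d hm, ← add_assoc] using hstep _
    simpa [prefixSum_of_le d le_rfl] using reach n le_rfl

end Walks

section Lift

variable {L : ℕ} {S : Set (ZMod L × ZMod L)} {p q v : ℤ × ℤ}

@[simp]
lemma castPair_add (a b : ℤ × ℤ) : castPair L (a + b) = castPair L a + castPair L b := by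
  simp [castPair]

@[simp]
lemma castPair_neg (a : ℤ × ℤ) : castPair L (-a) = -castPair L a := by
  simp [castPair]

@[simp]
lemma castPair_sub (a b : ℤ × ℤ) : castPair L (a - b) = castPair L a - castPair L b := by
  simp [castPair]

lemma castPair_surjective : Function.Surjective (castPair L) := fun x => by
  obtain ⟨a, ha⟩ := ZMod.intCast_surjective x.1
  obtain ⟨b, hb⟩ := ZMod.intCast_surjective x.2
  exact ⟨(a, b), by simp [castPair, ha, hb]⟩

lemma castPair_eq_zero_iff :
    castPair L v = 0 ↔ ∃ w : ℤ × ℤ, v = ((L : ℤ) * w.1, (L : ℤ) * w.2) := by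
  simp only [castPair, Prod.ext_iff, Prod.fst_zero, Prod.snd_zero,
    ZMod.intCast_zmod_eq_zero_iff_dvd]
  constructor
  · rintro ⟨⟨a, ha⟩, ⟨b, hb⟩⟩
    exact ⟨(a, b), ha, hb⟩
  · rintro ⟨w, h1, h2⟩
    exact ⟨⟨w.1, h1⟩, ⟨w.2, h2⟩⟩

lemma mem_liftComp_self : p ∈ liftComp L S p :=
  Relation.ReflTransGen.refl

lemma liftComp_subset_lift (hp : p ∈ lift L S) : liftComp L S p ⊆ lift L S := fun q hq => by
  rcases hq.cases_tail with rfl | ⟨_, _, hq⟩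
  exacts [hp, hq.2.1]

instance : Std.Symm (fun u v : ℤ × ℤ => u ∈ lift L S ∧ v ∈ lift L S ∧ AdjZ u v) where
  symm a b h := ⟨h.2.1, h.1, by
    rw [AdjZ, ← neg_sub]
    rcases h.2.2 with h | h | h | h <;> simp [IsUnitStep, h]⟩

lemma mem_liftComp_comm : q ∈ liftComp L S p ↔ p ∈ liftComp L S q :=
  Std.Symm.iff (r := Relation.ReflTransGen _) p q

lemma liftComp_eq_of_mem (h : q ∈ liftComp L S p) : liftComp L S q = liftComp L S p :=
  Set.ext fun _ => ⟨h.trans, (mem_liftComp_comm.1 h).trans⟩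

lemma add_mem_liftComp (hv : castPair L v = 0) (h : q ∈ liftComp L S p) :
    q + v ∈ liftComp L S (p + v) :=
  Relation.ReflTransGen.lift (· + v) (fun a b hab => by
    simpa [Function.onFun, lift, AdjZ, hv] using hab) _ _ h

lemma liftComp_add (hv : castPair L v = 0) :
    liftComp L S (p + v) = (· + v) '' liftComp L S p := by
  ext q
  refine ⟨fun h => ⟨q + -v, ?_, by simp⟩, fun ⟨r, hr, hq⟩ => hq ▸ add_mem_liftComp hv hr⟩
  simpa using add_mem_liftComp (v := -v) (by simp [hv]) h

lemma image_add_liftComp_eq_iff (hv : castPair L v = 0) :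
    (· + v) '' liftComp L S p = liftComp L S p ↔ p + v ∈ liftComp L S p := by
  rw [← liftComp_add hv]
  exact ⟨fun h => h ▸ mem_liftComp_self, liftComp_eq_of_mem⟩

lemma wraps_iff_exists_add_mem_liftComp :
    Wraps L S ↔ ∃ p ∈ lift L S, ∃ v, v ≠ 0 ∧ castPair L v = 0 ∧ p + v ∈ liftComp L S p := by
  constructor
  · rintro ⟨x, n, d, hstep, hmem, hzero, hv⟩
    obtain ⟨p, rfl⟩ := castPair_surjective x
    have hwalk : ∀ m ≤ n, p + prefixSum d m ∈ lift L S := fun m hm => by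
      simpa [lift, prefixSum] using hmem m hm
    have hp : p ∈ lift L S := by simpa using hwalk 0 n.zero_le
    exact ⟨p, hp, _, hv, hzero,
      (reflTransGen_iff_exists_steps hp).2 ⟨n, d, hstep, hwalk, rfl⟩⟩
  · rintro ⟨p, hp, v, hv, hzero, hpv⟩
    obtain ⟨n, d, hstep, hwalk, hsum⟩ := (reflTransGen_iff_exists_steps hp).1 hpv
    obtain rfl : ∑ i, d i = v := add_left_cancel hsum
    refine ⟨castPair L p, n, d, hstep, fun m hm => ?_, hzero, hv⟩
    simpa [lift, prefixSum] using hwalk m hm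

lemma liftComp_infinite_iff (hS : S.Finite) (hp : p ∈ lift L S) :
    (liftComp L S p).Infinite ↔ ∃ v, v ≠ 0 ∧ castPair L v = 0 ∧ p + v ∈ liftComp L S p := by
  constructor
  · intro hinf
    obtain ⟨a, ha, b, hb, hab, hcast⟩ :=
      hinf.exists_ne_map_eq_of_mapsTo (f := castPair L) (liftComp_subset_lift hp) hS
    have hv : castPair L (b - a) = 0 := by simp [hcast]
    have hb' := add_mem_liftComp hv ha
    rw [add_sub_cancel] at hb'
    exact ⟨b - a, sub_ne_zero.2 hab.symm, hv, hb.trans (mem_liftComp_comm.1 hb')⟩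
  · rintro ⟨v, hv, hzero, hpv⟩
    have orbit : ∀ k : ℕ, p + k • v ∈ liftComp L S p := by
      intro k
      induction k with
      | zero => simpa using mem_liftComp_self
      | succ k ih =>
        rw [← liftComp_eq_of_mem hpv, succ_nsmul, ← add_assoc]
        exact add_mem_liftComp hzero ih
    refine Set.infinite_of_injective_forall_mem (fun k l hkl => ?_) orbit
    exact Nat.cast_injective (smul_left_injective ℤ hv (by simpa using hkl))

end Lift

theorem wraps_iff_lift_component_general (L : ℕ)
    (S : Set (ZMod L × ZMod L)) (hfin : S.Finite) :
    (Wraps L S ↔ ∃ p ∈ lift L S, ∃ v : ℤ × ℤ, v ≠ 0 ∧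
        (∃ w : ℤ × ℤ, v = ((L : ℤ) * w.1, (L : ℤ) * w.2)) ∧
        (fun q => q + v) '' liftComp L S p = liftComp L S p) ∧
    (Wraps L S ↔ ∃ p ∈ lift L S, (liftComp L S p).Infinite) := by
  have invariant_iff : ∀ p, (∃ v, v ≠ 0 ∧ castPair L v = 0 ∧ p + v ∈ liftComp L S p) ↔
      ∃ v : ℤ × ℤ, v ≠ 0 ∧ (∃ w : ℤ × ℤ, v = ((L : ℤ) * w.1, (L : ℤ) * w.2)) ∧
        (fun q => q + v) '' liftComp L S p = liftComp L S p := fun p =>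
    exists_congr fun v => and_congr_right' <| by
      rw [← castPair_eq_zero_iff]
      exact and_congr_right fun hv => (image_add_liftComp_eq_iff hv).symm
  rw [wraps_iff_exists_add_mem_liftComp]
  exact ⟨exists_congr fun p => and_congr_right fun _ => invariant_iff p,
    exists_congr fun p => and_congr_right fun hp => (liftComp_infinite_iff hfin hp).symm⟩

/-- Let `S` be a finite connected subgraph of the toroidal lattice.  Then `S`
contains a closed walk with nonzero winding vector iff some connected component
of its lift `S̃ ⊆ ℤ²` is invariant under translation by a nonzero vector of
`L·ℤ²`, equivalently iff some component of the lift is infinite. -/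
theorem wraps_iff_lift_component (L : ℕ) (hL : 0 < L)
    (S : Set (ZMod L × ZMod L)) (hfin : S.Finite) (hne : S.Nonempty)
    (hconn : ∀ a ∈ S, ∀ b ∈ S,
      Relation.ReflTransGen (fun p q => p ∈ S ∧ q ∈ S ∧ Adj L p q) a b) :
    (Wraps L S ↔ ∃ p ∈ lift L S, ∃ v : ℤ × ℤ, v ≠ 0 ∧
        (∃ w : ℤ × ℤ, v = ((L : ℤ) * w.1, (L : ℤ) * w.2)) ∧
        (fun q => q + v) '' liftComp L S p = liftComp L S p) ∧
    (Wraps L S ↔ ∃ p ∈ lift L S, (liftComp L S p).Infinite) :=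
  wraps_iff_lift_component_general L S hfin
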